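/- Half-characteristic constants relations connecting the B sector with the A sector: θ[0,1;0,0](0,0) · θ[0,0;0,0](0,0) = 2 · ( Θ[0,1/2;0,0](0,0)² + Θ[1,1/2;0,0](0,0)² ) and θ[0,1;1,0](0,0) · θ[0,0;1,0](0,0) = 2 · ( Θ[0,1/2;0,0](0,0)² − Θ[1,1/2;0,0](0,0)² ). -/

import Mathlib

open Complex

/-- Genus-two theta function with real characteristics `a c b d`
(upper characteristics `a, c`, lower characteristics `b, d`),
moduli `τ₁ τ₂ τ₁₂` and complex arguments `x y`. -/
noncomputable def theta (τ₁ τ₂ τ₁₂ : ℂ) (a c b d : ℝ) (x y : ℂ) : ℂ :=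
  ∑' p : ℤ × ℤ,
    Complex.exp
      ((Real.pi : ℂ) * Complex.I *
          (τ₁ * ((p.1 : ℂ) + (a : ℂ) / 2) ^ 2 + τ₂ * ((p.2 : ℂ) + (c : ℂ) / 2) ^ 2 +
            2 * τ₁₂ * ((p.1 : ℂ) + (a : ℂ) / 2) * ((p.2 : ℂ) + (c : ℂ) / 2)) +
        2 * (Real.pi : ℂ) * Complex.I *
          (((p.1 : ℂ) + (a : ℂ) / 2) * (x + (b : ℂ) / 2) +
            ((p.2 : ℂ) + (c : ℂ) / 2) * (y + (d : ℂ) / 2)))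

/-- The same theta function with doubled moduli `2τ₁, 2τ₂, 2τ₁₂`. -/
noncomputable def Theta2 (τ₁ τ₂ τ₁₂ : ℂ) (a c b d : ℝ) (x y : ℂ) : ℂ :=
  theta (2 * τ₁) (2 * τ₂) (2 * τ₁₂) a c b d x y

/-!
Write both theta constants as lattice sums over `ℤ²` and multiply them. In each coordinate,
substitute `m = k + l + e`, `m' = k - l`, where `e ∈ {0, 1}` is the common parity of `m + m'`
and `m - m'`; the parallelogram identity for the quadratic form of the moduli then turns the
product of two theta constants with moduli `τ` into a sum over `e, f ∈ {0, 1}` of products of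
theta constants with moduli `2τ` and upper characteristics shifted by `e, f`. In the claimed
identities these four terms collapse in pairs, because `Θ[e, 3/2] = Θ[e, 1/2]` by the symmetries
`(a, c) ↦ (-a, -c)` and `a ↦ a + 2`, `c ↦ c + 2` of the characteristics, while the lower
characteristic `2` arising in the second identity contributes the sign `exp(π i e) = (-1)^e`.
-/

noncomputable def thetaTerm (τ₁ τ₂ τ₁₂ : ℂ) (a c b d : ℝ) (x y : ℂ) (p : ℤ × ℤ) : ℂ :=
  cexp ((Real.pi : ℂ) * I *
          (τ₁ * ((p.1 : ℂ) + (a : ℂ) / 2) ^ 2 + τ₂ * ((p.2 : ℂ) + (c : ℂ) / 2) ^ 2 +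
            2 * τ₁₂ * ((p.1 : ℂ) + (a : ℂ) / 2) * ((p.2 : ℂ) + (c : ℂ) / 2)) +
        2 * (Real.pi : ℂ) * I *
          (((p.1 : ℂ) + (a : ℂ) / 2) * (x + (b : ℂ) / 2) +
            ((p.2 : ℂ) + (c : ℂ) / 2) * (y + (d : ℂ) / 2)))

section

variable (τ₁ τ₂ τ₁₂ : ℂ)

theorem theta_eq_tsum_thetaTerm (a c b d : ℝ) (x y : ℂ) :
    theta τ₁ τ₂ τ₁₂ a c b d x y = ∑' p, thetaTerm τ₁ τ₂ τ₁₂ a c b d x y p :=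
  rfl

theorem theta_add_two_fst (a c b d : ℝ) (x y : ℂ) :
    theta τ₁ τ₂ τ₁₂ (a + 2) c b d x y = theta τ₁ τ₂ τ₁₂ a c b d x y := by
  rw [theta_eq_tsum_thetaTerm, theta_eq_tsum_thetaTerm,
    ← (Equiv.subRight ((1, 0) : ℤ × ℤ)).tsum_eq]
  refine tsum_congr fun p => ?_
  simp only [thetaTerm, Equiv.subRight_apply, Prod.fst_sub, Prod.snd_sub]
  congr 1
  push_cast
  ring

theorem theta_add_two_snd (a c b d : ℝ) (x y : ℂ) :
    theta τ₁ τ₂ τ₁₂ a (c + 2) b d x y = theta τ₁ τ₂ τ₁₂ a c b d x y := by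
  rw [theta_eq_tsum_thetaTerm, theta_eq_tsum_thetaTerm,
    ← (Equiv.subRight ((0, 1) : ℤ × ℤ)).tsum_eq]
  refine tsum_congr fun p => ?_
  simp only [thetaTerm, Equiv.subRight_apply, Prod.fst_sub, Prod.snd_sub]
  congr 1
  push_cast
  ring

theorem theta_neg (a c b d : ℝ) (x y : ℂ) :
    theta τ₁ τ₂ τ₁₂ (-a) (-c) (-b) (-d) (-x) (-y) = theta τ₁ τ₂ τ₁₂ a c b d x y := by
  rw [theta_eq_tsum_thetaTerm, theta_eq_tsum_thetaTerm, ← (Equiv.neg (ℤ × ℤ)).tsum_eq]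
  refine tsum_congr fun p => ?_
  simp only [thetaTerm, Equiv.neg_apply, Prod.fst_neg, Prod.snd_neg]
  congr 1
  push_cast
  ring

theorem theta_add_two_lower_fst (a c b d : ℝ) (x y : ℂ) :
    theta τ₁ τ₂ τ₁₂ a c (b + 2) d x y =
      cexp (Real.pi * I * a) * theta τ₁ τ₂ τ₁₂ a c b d x y := by
  rw [theta_eq_tsum_thetaTerm, theta_eq_tsum_thetaTerm, ← tsum_mul_left]
  refine tsum_congr fun p => ?_
  rw [thetaTerm, thetaTerm, ← exp_add, exp_eq_exp_iff_exists_int]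
  exact ⟨p.1, by push_cast; ring⟩

theorem norm_thetaTerm_zero (a c b d : ℝ) (p : ℤ × ℤ) :
    ‖thetaTerm τ₁ τ₂ τ₁₂ a c b d 0 0 p‖ =
      Real.exp (-Real.pi * (τ₁.im * (p.1 + a / 2) ^ 2 + τ₂.im * (p.2 + c / 2) ^ 2 +
        2 * τ₁₂.im * (p.1 + a / 2) * (p.2 + c / 2))) := by
  have hu : (p.1 : ℂ) + (a : ℂ) / 2 = ((p.1 + a / 2 : ℝ) : ℂ) := by push_cast; ring
  have hv : (p.2 : ℂ) + (c : ℂ) / 2 = ((p.2 + c / 2 : ℝ) : ℂ) := by push_cast; ring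
  rw [thetaTerm, norm_exp, hu, hv]
  generalize (p.1 : ℝ) + a / 2 = u
  generalize (p.2 : ℝ) + c / 2 = v
  congr 1
  simp [mul_re, mul_im, ← ofReal_pow]

theorem theta_two_sub_two_sub_zero (a c : ℝ) :
    theta τ₁ τ₂ τ₁₂ (2 - a) (2 - c) 0 0 0 0 = theta τ₁ τ₂ τ₁₂ a c 0 0 0 0 := by
  calc theta τ₁ τ₂ τ₁₂ (2 - a) (2 - c) 0 0 0 0
      = theta τ₁ τ₂ τ₁₂ (-a + 2) (-c + 2) (-0) (-0) (-0) (-0) := by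
        simp only [neg_zero, neg_add_eq_sub]
    _ = theta τ₁ τ₂ τ₁₂ a c 0 0 0 0 := by rw [theta_add_two_fst, theta_add_two_snd, theta_neg]

/-- The parallelogram identity `Q(u) + Q(u') = 2 Q((u + u') / 2) + 2 Q((u - u') / 2)` for the
quadratic form `Q` of the moduli. -/
theorem thetaTerm_mul_thetaTerm (a c b d a' c' b' d' : ℝ) (x y x' y' : ℂ) (e f k k' l l' : ℤ) :
    thetaTerm τ₁ τ₂ τ₁₂ a c b d x y (k + l + e, k' + l' + f) *
        thetaTerm τ₁ τ₂ τ₁₂ a' c' b' d' x' y' (k - l, k' - l') =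
      thetaTerm (2 * τ₁) (2 * τ₂) (2 * τ₁₂) (e + (a + a') / 2) (f + (c + c') / 2)
          (b + b') (d + d') (x + x') (y + y') (k, k') *
        thetaTerm (2 * τ₁) (2 * τ₂) (2 * τ₁₂) (e + (a - a') / 2) (f + (c - c') / 2)
          (b - b') (d - d') (x - x') (y - y') (l, l') := by
  simp only [thetaTerm, ← exp_add]
  congr 1
  push_cast
  ring

end

theorem exists_pos_mul_sq_add_sq_le {y₁ y₂ y₁₂ : ℝ} (h₁ : 0 < y₁) (h : y₁₂ ^ 2 < y₁ * y₂) :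
    ∃ δ > 0, ∀ u v : ℝ, δ * (u ^ 2 + v ^ 2) ≤ y₁ * u ^ 2 + y₂ * v ^ 2 + 2 * y₁₂ * u * v := by
  have h₂ : 0 < y₂ := by nlinarith [sq_nonneg y₁₂]
  refine ⟨(y₁ * y₂ - y₁₂ ^ 2) / (y₁ + y₂), by apply div_pos <;> linarith, fun u v => ?_⟩
  rw [div_mul_eq_mul_div, div_le_iff₀ (by linarith)]
  nlinarith [sq_nonneg (y₁ * u + y₁₂ * v), sq_nonneg (y₁₂ * u + y₂ * v)]

theorem summable_exp_neg_mul_add_sq {c : ℝ} (hc : 0 < c) (α : ℝ) :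
    Summable fun n : ℤ => Real.exp (-c * (n + α) ^ 2) := by
  have h := ((summable_jacobiTheta₂_term_iff (↑(c * α / Real.pi) * I) (↑(c / Real.pi) * I)).mpr
    (by simpa using div_pos hc Real.pi_pos)).norm.mul_left (Real.exp (-c * α ^ 2))
  refine h.congr fun n => ?_
  rw [norm_jacobiTheta₂_term, ← Real.exp_add]
  congr 1
  simp only [mul_im, ofReal_re, I_im, ofReal_im, I_re, mul_zero, mul_one, add_zero]
  field_simp
  ring

theorem summable_norm_thetaTerm_zero {τ₁ τ₂ τ₁₂ : ℂ} (hτ₁ : 0 < τ₁.im)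
    (hτ : τ₁₂.im ^ 2 < τ₁.im * τ₂.im) (a c b d : ℝ) :
    Summable fun p => ‖thetaTerm τ₁ τ₂ τ₁₂ a c b d 0 0 p‖ := by
  obtain ⟨δ, hδ, hQ⟩ := exists_pos_mul_sq_add_sq_le hτ₁ hτ
  have hπδ : 0 < Real.pi * δ := mul_pos Real.pi_pos hδ
  refine ((summable_exp_neg_mul_add_sq hπδ (a / 2)).mul_of_nonneg
    (summable_exp_neg_mul_add_sq hπδ (c / 2)) (fun _ => (Real.exp_pos _).le)
    (fun _ => (Real.exp_pos _).le)).of_nonneg_of_le (fun _ => norm_nonneg _) fun p => ?_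
  rw [norm_thetaTerm_zero, ← Real.exp_add, Real.exp_le_exp]
  nlinarith [mul_le_mul_of_nonneg_left (hQ (p.1 + a / 2) (p.2 + c / 2)) Real.pi_pos.le]

/-- Pairs `(m, m')` are parametrized by the common parity `e` of `m + m'` and `m - m'` together
with `k = (m + m' - e) / 2` and `l = (m - m' - e) / 2`. -/
def sumDiffEquiv : Fin 2 × ℤ × ℤ ≃ ℤ × ℤ where
  toFun w := (w.2.1 + w.2.2 + (w.1 : ℕ), w.2.1 - w.2.2)
  invFun z := (⟨((z.1 + z.2) % 2).toNat, by omega⟩, (z.1 + z.2) / 2, (z.1 - z.2) / 2)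
  left_inv := by
    rintro ⟨e, k, l⟩
    have := e.isLt
    simp only [Prod.mk.injEq, Fin.ext_iff]
    omega
  right_inv := by
    rintro ⟨m, m'⟩
    simp only [Prod.mk.injEq]
    omega

def latticePairEquiv : (Fin 2 × Fin 2) × (ℤ × ℤ) × (ℤ × ℤ) ≃ (ℤ × ℤ) × (ℤ × ℤ) :=
  ((Equiv.refl _).prodCongr (Equiv.prodProdProdComm _ _ _ _)).trans <|
    (Equiv.prodProdProdComm _ _ _ _).trans <|
      (sumDiffEquiv.prodCongr sumDiffEquiv).trans (Equiv.prodProdProdComm _ _ _ _)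

theorem latticePairEquiv_apply (e f : Fin 2) (k k' l l' : ℤ) :
    latticePairEquiv ((e, f), (k, k'), (l, l')) =
      ((k + l + (e : ℕ), k' + l' + (f : ℕ)), (k - l, k' - l')) :=
  rfl

theorem theta_mul_theta_zero {τ₁ τ₂ τ₁₂ : ℂ} (hτ₁ : 0 < τ₁.im) (hτ : τ₁₂.im ^ 2 < τ₁.im * τ₂.im)
    (a c b d a' c' b' d' : ℝ) :
    theta τ₁ τ₂ τ₁₂ a c b d 0 0 * theta τ₁ τ₂ τ₁₂ a' c' b' d' 0 0 =
      ∑ e : Fin 2, ∑ f : Fin 2,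
        Theta2 τ₁ τ₂ τ₁₂ (e + (a + a') / 2) (f + (c + c') / 2) (b + b') (d + d') 0 0 *
          Theta2 τ₁ τ₂ τ₁₂ (e + (a - a') / 2) (f + (c - c') / 2) (b - b') (d - d') 0 0 := by
  have h2τ₁ : 0 < (2 * τ₁).im := by simpa using hτ₁
  have h2τ : (2 * τ₁₂).im ^ 2 < (2 * τ₁).im * (2 * τ₂).im := by
    simp only [mul_im, re_ofNat, im_ofNat, zero_mul, add_zero]
    nlinarith
  set T := thetaTerm τ₁ τ₂ τ₁₂ a c b d 0 0
  set T' := thetaTerm τ₁ τ₂ τ₁₂ a' c' b' d' 0 0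
  set S : Fin 2 × Fin 2 → ℤ × ℤ → ℂ := fun ef => thetaTerm (2 * τ₁) (2 * τ₂) (2 * τ₁₂)
    (ef.1 + (a + a') / 2) (ef.2 + (c + c') / 2) (b + b') (d + d') 0 0
  set S' : Fin 2 × Fin 2 → ℤ × ℤ → ℂ := fun ef => thetaTerm (2 * τ₁) (2 * τ₂) (2 * τ₁₂)
    (ef.1 + (a - a') / 2) (ef.2 + (c - c') / 2) (b - b') (d - d') 0 0
  have hT := summable_norm_thetaTerm_zero hτ₁ hτ a c b d
  have hT' := summable_norm_thetaTerm_zero hτ₁ hτ a' c' b' d'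
  have hterm (w : (Fin 2 × Fin 2) × (ℤ × ℤ) × (ℤ × ℤ)) :
      T (latticePairEquiv w).1 * T' (latticePairEquiv w).2 = S w.1 w.2.1 * S' w.1 w.2.2 := by
    obtain ⟨⟨e, f⟩, ⟨k, k'⟩, ⟨l, l'⟩⟩ := w
    simp only [latticePairEquiv_apply, T, T', S, S']
    simpa only [Int.cast_natCast, add_zero, sub_zero] using
      thetaTerm_mul_thetaTerm τ₁ τ₂ τ₁₂ a c b d a' c' b' d' 0 0 0 0 e f k k' l l'
  have hS : Summable fun w : (Fin 2 × Fin 2) × (ℤ × ℤ) × (ℤ × ℤ) => S w.1 w.2.1 * S' w.1 w.2.2 :=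
    (latticePairEquiv.summable_iff.mpr (hT.mul_norm hT').of_norm).congr hterm
  calc theta τ₁ τ₂ τ₁₂ a c b d 0 0 * theta τ₁ τ₂ τ₁₂ a' c' b' d' 0 0
      = ∑' z : (ℤ × ℤ) × (ℤ × ℤ), T z.1 * T' z.2 := tsum_mul_tsum_of_summable_norm hT hT'
    _ = ∑' w : (Fin 2 × Fin 2) × (ℤ × ℤ) × (ℤ × ℤ), S w.1 w.2.1 * S' w.1 w.2.2 := by
      rw [← latticePairEquiv.tsum_eq]
      exact tsum_congr hterm
    _ = ∑ ef : Fin 2 × Fin 2, (∑' K, S ef K) * ∑' L, S' ef L := by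
      rw [hS.tsum_prod, tsum_fintype]
      dsimp only
      refine Finset.sum_congr rfl fun ef _ => (tsum_mul_tsum_of_summable_norm ?_ ?_).symm
      · exact summable_norm_thetaTerm_zero h2τ₁ h2τ _ _ _ _
      · exact summable_norm_thetaTerm_zero h2τ₁ h2τ _ _ _ _
    _ = _ := Fintype.sum_prod_type _

theorem half_characteristic_constants_BA_general (τ₁ τ₂ τ₁₂ : ℂ)
    (hτ₁ : 0 < τ₁.im) (hτ : τ₁₂.im ^ 2 < τ₁.im * τ₂.im) :
    theta τ₁ τ₂ τ₁₂ 0 1 0 0 0 0 * theta τ₁ τ₂ τ₁₂ 0 0 0 0 0 0 =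
        2 * (Theta2 τ₁ τ₂ τ₁₂ 0 (1/2) 0 0 0 0 ^ 2 +
          Theta2 τ₁ τ₂ τ₁₂ 1 (1/2) 0 0 0 0 ^ 2) ∧
      theta τ₁ τ₂ τ₁₂ 0 1 1 0 0 0 * theta τ₁ τ₂ τ₁₂ 0 0 1 0 0 0 =
        2 * (Theta2 τ₁ τ₂ τ₁₂ 0 (1/2) 0 0 0 0 ^ 2 -
          Theta2 τ₁ τ₂ τ₁₂ 1 (1/2) 0 0 0 0 ^ 2) := by
  have h₀ : Theta2 τ₁ τ₂ τ₁₂ 0 (3 / 2) 0 0 0 0 = Theta2 τ₁ τ₂ τ₁₂ 0 (1 / 2) 0 0 0 0 := by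
    unfold Theta2
    rw [← theta_add_two_fst]
    convert theta_two_sub_two_sub_zero _ _ _ 0 (1 / 2) using 2 <;> norm_num
  have h₁ : Theta2 τ₁ τ₂ τ₁₂ 1 (3 / 2) 0 0 0 0 = Theta2 τ₁ τ₂ τ₁₂ 1 (1 / 2) 0 0 0 0 := by
    unfold Theta2
    convert theta_two_sub_two_sub_zero _ _ _ 1 (1 / 2) using 2 <;> norm_num
  have hsign (a c : ℝ) : Theta2 τ₁ τ₂ τ₁₂ a c 2 0 0 0 =
      cexp (Real.pi * I * a) * Theta2 τ₁ τ₂ τ₁₂ a c 0 0 0 0 := by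
    simpa only [Theta2, zero_add] using
      theta_add_two_lower_fst (2 * τ₁) (2 * τ₂) (2 * τ₁₂) a c 0 0 0 0
  rw [theta_mul_theta_zero hτ₁ hτ, theta_mul_theta_zero hτ₁ hτ]
  norm_num [Fin.sum_univ_two, hsign, h₀, h₁, exp_pi_mul_I]
  constructor <;> ring

theorem half_characteristic_constants_BA (τ₁ τ₂ τ₁₂ : ℂ)
    (hτ₁ : 0 < τ₁.im) (hτ₂ : 0 < τ₂.im) (hτ : τ₁₂.im ^ 2 < τ₁.im * τ₂.im) :
    theta τ₁ τ₂ τ₁₂ 0 1 0 0 0 0 * theta τ₁ τ₂ τ₁₂ 0 0 0 0 0 0 =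
        2 * (Theta2 τ₁ τ₂ τ₁₂ 0 (1/2) 0 0 0 0 ^ 2 +
          Theta2 τ₁ τ₂ τ₁₂ 1 (1/2) 0 0 0 0 ^ 2) ∧
      theta τ₁ τ₂ τ₁₂ 0 1 1 0 0 0 * theta τ₁ τ₂ τ₁₂ 0 0 1 0 0 0 =
        2 * (Theta2 τ₁ τ₂ τ₁₂ 0 (1/2) 0 0 0 0 ^ 2 -
          Theta2 τ₁ τ₂ τ₁₂ 1 (1/2) 0 0 0 0 ^ 2) :=
  half_characteristic_constants_BA_general τ₁ τ₂ τ₁₂ hτ₁ hτ
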